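/- The 3D Nambu–Poisson bracket {f,g} = ρ·det(∂(f,g,a)/∂(x,y,z)) satisfies the Jacobi identity {f,{g,h}} + {g,{h,f}} + {h,{f,g}} = 0 for all smooth functions f, g, h. -/

import Mathlib

/-- Gradient (row of partial derivatives) of a function on `ℝ³ = Fin 3 → ℝ`. -/
noncomputable def grad3 (f : (Fin 3 → ℝ) → ℝ) (p : Fin 3 → ℝ) : Fin 3 → ℝ :=
  fun j => fderiv ℝ f p (Pi.single j 1)

/-- The 3D Nambu–Poisson bracket `{f,g} = ρ · det(∂(f,g,a)/∂(x,y,z))`. -/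
noncomputable def nb3 (ρ a f g : (Fin 3 → ℝ) → ℝ) : (Fin 3 → ℝ) → ℝ :=
  fun p => ρ p * (Matrix.of ![grad3 f p, grad3 g p, grad3 a p]).det

noncomputable def pd (i : Fin 3) (φ : (Fin 3 → ℝ) → ℝ) (p : Fin 3 → ℝ) : ℝ :=
  fderiv ℝ φ p (Pi.single i 1)

noncomputable def pd2 (i j : Fin 3) (φ : (Fin 3 → ℝ) → ℝ) (p : Fin 3 → ℝ) : ℝ :=
  fderiv ℝ (fderiv ℝ φ) p (Pi.single i 1) (Pi.single j 1)

lemma pd2_symm {φ : (Fin 3 → ℝ) → ℝ} (hφ : ContDiff ℝ (⊤ : ℕ∞) φ) (i j : Fin 3) (p : Fin 3 → ℝ) :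
    pd2 i j φ p = pd2 j i φ p :=
  (hφ.contDiffAt.isSymmSndFDerivAt (by simp; exact WithTop.coe_le_coe.mpr le_top)) _ _

lemma hasFDerivAt_pd {φ : (Fin 3 → ℝ) → ℝ} (hφ : ContDiff ℝ (⊤ : ℕ∞) φ) (i : Fin 3) (p : Fin 3 → ℝ) :
    HasFDerivAt (pd i φ) ((fderiv ℝ (fderiv ℝ φ) p).flip (Pi.single i 1)) p := by
  have h2 : ContDiff ℝ (⊤:ℕ∞) (fderiv ℝ φ) := (contDiff_infty_iff_fderiv.mp (hφ.of_le (by simp))).2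
  have h1 : HasFDerivAt (fderiv ℝ φ) (fderiv ℝ (fderiv ℝ φ) p) p :=
    (h2.differentiable (by simp) p).hasFDerivAt
  exact (by simpa using h1.clm_apply (hasFDerivAt_const (Pi.single i 1) p) :
    HasFDerivAt (fun y => fderiv ℝ φ y (Pi.single i 1)) ((fderiv ℝ (fderiv ℝ φ) p).flip (Pi.single i 1)) p)

lemma nb3_apply (ρ a χ θ : (Fin 3 → ℝ) → ℝ) (p : Fin 3 → ℝ) : nb3 ρ a χ θ p =
    ρ p * (pd 0 χ p * (pd 1 θ p * pd 2 a p - pd 2 θ p * pd 1 a p)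
         - pd 1 χ p * (pd 0 θ p * pd 2 a p - pd 2 θ p * pd 0 a p)
         + pd 2 χ p * (pd 0 θ p * pd 1 a p - pd 1 θ p * pd 0 a p)) := by
  simp only [nb3, Matrix.det_fin_three]
  simp only [Matrix.of_apply, Matrix.cons_val', Matrix.cons_val_zero, Matrix.empty_val',
    Matrix.cons_val_fin_one, Matrix.cons_val_one, Matrix.head_cons, Matrix.head_fin_const, Matrix.cons_val_two, Matrix.tail_cons]
  simp only [grad3, pd]; ring

lemma grad3_nb3 {ρ a χ θ : (Fin 3 → ℝ) → ℝ} (hρ : ContDiff ℝ (⊤ : ℕ∞) ρ) (ha : ContDiff ℝ (⊤ : ℕ∞) a)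
    (hχ : ContDiff ℝ (⊤ : ℕ∞) χ) (hθ : ContDiff ℝ (⊤ : ℕ∞) θ) (j : Fin 3) (p : Fin 3 → ℝ) :
    pd j (nb3 ρ a χ θ) p =
      pd j ρ p * (pd 0 χ p * (pd 1 θ p * pd 2 a p - pd 2 θ p * pd 1 a p)
                - pd 1 χ p * (pd 0 θ p * pd 2 a p - pd 2 θ p * pd 0 a p)
                + pd 2 χ p * (pd 0 θ p * pd 1 a p - pd 1 θ p * pd 0 a p))
      + ρ p * ( pd2 j 0 χ p * (pd 1 θ p * pd 2 a p - pd 2 θ p * pd 1 a p)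
              + pd 0 χ p * (pd2 j 1 θ p * pd 2 a p + pd 1 θ p * pd2 j 2 a p
                            - pd2 j 2 θ p * pd 1 a p - pd 2 θ p * pd2 j 1 a p)
              - pd2 j 1 χ p * (pd 0 θ p * pd 2 a p - pd 2 θ p * pd 0 a p)
              - pd 1 χ p * (pd2 j 0 θ p * pd 2 a p + pd 0 θ p * pd2 j 2 a p
                            - pd2 j 2 θ p * pd 0 a p - pd 2 θ p * pd2 j 0 a p)
              + pd2 j 2 χ p * (pd 0 θ p * pd 1 a p - pd 1 θ p * pd 0 a p)
              + pd 2 χ p * (pd2 j 0 θ p * pd 1 a p + pd 0 θ p * pd2 j 1 a p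
                            - pd2 j 1 θ p * pd 0 a p - pd 1 θ p * pd2 j 0 a p)) := by
  have hnb : nb3 ρ a χ θ = fun q =>
      ρ q * (pd 0 χ q * (pd 1 θ q * pd 2 a q - pd 2 θ q * pd 1 a q)
           - pd 1 χ q * (pd 0 θ q * pd 2 a q - pd 2 θ q * pd 0 a q)
           + pd 2 χ q * (pd 0 θ q * pd 1 a q - pd 1 θ q * pd 0 a q)) := funext (nb3_apply ρ a χ θ)
  have Hρ : HasFDerivAt ρ (fderiv ℝ ρ p) p := (hρ.differentiable (by simp) p).hasFDerivAt
  have H := Hρ.mul ((((hasFDerivAt_pd hχ 0 p).mul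
        (((hasFDerivAt_pd hθ 1 p).mul (hasFDerivAt_pd ha 2 p)).sub
         ((hasFDerivAt_pd hθ 2 p).mul (hasFDerivAt_pd ha 1 p)))).sub
      ((hasFDerivAt_pd hχ 1 p).mul
        (((hasFDerivAt_pd hθ 0 p).mul (hasFDerivAt_pd ha 2 p)).sub
         ((hasFDerivAt_pd hθ 2 p).mul (hasFDerivAt_pd ha 0 p))))).add
      ((hasFDerivAt_pd hχ 2 p).mul
        (((hasFDerivAt_pd hθ 0 p).mul (hasFDerivAt_pd ha 1 p)).sub
         ((hasFDerivAt_pd hθ 1 p).mul (hasFDerivAt_pd ha 0 p)))))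
  show fderiv ℝ (nb3 ρ a χ θ) p (Pi.single j 1) = _
  rw [show nb3 ρ a χ θ = ρ * (pd 0 χ * (pd 1 θ * pd 2 a - pd 2 θ * pd 1 a) - pd 1 χ * (pd 0 θ * pd 2 a - pd 2 θ * pd 0 a) +
      pd 2 χ * (pd 0 θ * pd 1 a - pd 1 θ * pd 0 a)) from hnb, H.fderiv]
  simp only [ContinuousLinearMap.add_apply, ContinuousLinearMap.smul_apply,
    ContinuousLinearMap.sub_apply, ContinuousLinearMap.flip_apply, smul_eq_mul, Pi.mul_apply, Pi.sub_apply, Pi.add_apply, pd, pd2]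
  ring

/-- The 3D Nambu–Poisson bracket satisfies the Jacobi identity. -/
theorem nambu3_jacobi (ρ a : (Fin 3 → ℝ) → ℝ) (hρ : ContDiff ℝ (⊤ : ℕ∞) ρ) (ha : ContDiff ℝ (⊤ : ℕ∞) a)
    (f g h : (Fin 3 → ℝ) → ℝ)
    (hf : ContDiff ℝ (⊤ : ℕ∞) f) (hg : ContDiff ℝ (⊤ : ℕ∞) g) (hh : ContDiff ℝ (⊤ : ℕ∞) h) :
    ∀ p, nb3 ρ a f (nb3 ρ a g h) p + nb3 ρ a g (nb3 ρ a h f) p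
        + nb3 ρ a h (nb3 ρ a f g) p = 0 := by
  intro p
  rw [nb3_apply ρ a f (nb3 ρ a g h) p, nb3_apply ρ a g (nb3 ρ a h f) p,
      nb3_apply ρ a h (nb3 ρ a f g) p,
      grad3_nb3 hρ ha hg hh 0 p, grad3_nb3 hρ ha hg hh 1 p, grad3_nb3 hρ ha hg hh 2 p,
      grad3_nb3 hρ ha hh hf 0 p, grad3_nb3 hρ ha hh hf 1 p, grad3_nb3 hρ ha hh hf 2 p,
      grad3_nb3 hρ ha hf hg 0 p, grad3_nb3 hρ ha hf hg 1 p, grad3_nb3 hρ ha hf hg 2 p]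
  simp only [pd2_symm hf (1:Fin 3) 0 p, pd2_symm hf (2:Fin 3) 0 p, pd2_symm hf (2:Fin 3) 1 p,
    pd2_symm hg (1:Fin 3) 0 p, pd2_symm hg (2:Fin 3) 0 p, pd2_symm hg (2:Fin 3) 1 p,
    pd2_symm hh (1:Fin 3) 0 p, pd2_symm hh (2:Fin 3) 0 p, pd2_symm hh (2:Fin 3) 1 p,
    pd2_symm ha (1:Fin 3) 0 p, pd2_symm ha (2:Fin 3) 0 p, pd2_symm ha (2:Fin 3) 1 p]
  ring
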